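/- Let R be an integral domain with quotient field K and A an integral domain containing R with a retraction Φ : A → R whose kernel is finitely generated. If A ⊗_R K is a polynomial ring in one variable over K, then there exist t ∈ R, t ≠ 0, and F ∈ Ker Φ such that A[1/t] = R[1/t][F], a polynomial ring in one variable over R[1/t]. -/

import Mathlib

/-!
Replace `x₀` by `F = x₀ - Φ x₀`, so that `Φ F = 0` and `R[F] = R[x₀]`. Clearing the denominators
of the finitely many generators of `Ker Φ` (each an element of `R[F]` with zero constant term up to
a nonzero scalar) gives `t ≠ 0` with `t • Ker Φ ⊆ F A`. As `A = R ⊕ Ker Φ`, iterating this shows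
`tⁿ a ≡ q(F) mod Fᴺ` with `deg q < N`, for every `N`. If `r a = p(F)` with `r ≠ 0` and
`deg p < N`, then `tⁿ p - r q` has degree `< N` while its value at `F` is divisible by `Fᴺ`;
since `F` is transcendental and every element of `A` has a nonzero multiple in `R[F]`, this
forces `tⁿ p = r q`, i.e. `tⁿ a = q(F)`.
-/

open Polynomial

section Retraction

variable {R A : Type*} [CommRing R] [CommRing A] [Algebra R A]

theorem Transcendental.sub_algebraMap [Nontrivial R] {x : A} (hx : Transcendental R x) (c : R) :
    Transcendental R (x - algebraMap R A c) := by
  have := hx.aeval (X - C c) (by simp) (by simp)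
  rwa [map_sub, aeval_X, aeval_C] at this

theorem Algebra.adjoin_singleton_sub_algebraMap (x : A) (c : R) :
    Algebra.adjoin R {x - algebraMap R A c} = Algebra.adjoin R {x} := by
  apply le_antisymm <;> refine Algebra.adjoin_singleton_le ?_
  · exact sub_mem (Algebra.self_mem_adjoin_singleton R x) (Subalgebra.algebraMap_mem _ c)
  · simpa using add_mem (Algebra.self_mem_adjoin_singleton R (x - algebraMap R A c))
      (Subalgebra.algebraMap_mem _ c)

theorem AlgHom.apply_aeval_eq_coeff_zero (Φ : A →ₐ[R] R) {F : A} (hF : Φ F = 0) (p : R[X]) :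
    Φ (aeval F p) = p.coeff 0 := by
  rw [← aeval_algHom_apply, hF, coeff_zero_eq_aeval_zero]

theorem dvd_aeval_of_coeff_zero_eq_zero (F : A) {p : R[X]} (hp : p.coeff 0 = 0) :
    F ∣ aeval F p := by
  obtain ⟨q, rfl⟩ := X_dvd_iff.mpr hp
  exact ⟨aeval F q, by simp⟩

theorem exists_ne_zero_dvd_mul_of_mem_ker [IsDomain R] (Φ : A →ₐ[R] R)
    (hfg : (RingHom.ker Φ).FG) {F : A} (hΦF : Φ F = 0)
    (hfrac : ∀ a : A, ∃ s : R, s ≠ 0 ∧ algebraMap R A s * a ∈ Algebra.adjoin R {F}) :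
    ∃ t : R, t ≠ 0 ∧ ∀ b ∈ RingHom.ker Φ, F ∣ algebraMap R A t * b := by
  classical
  obtain ⟨S, hS⟩ := hfg
  simp only [Algebra.adjoin_singleton_eq_range_aeval, AlgHom.mem_range] at hfrac
  choose s hs0 p hp using hfrac
  refine ⟨∏ f ∈ S, s f, Finset.prod_ne_zero_iff.mpr fun f _ => hs0 f, fun b hb => ?_⟩
  rw [← hS] at hb
  induction hb using Submodule.span_induction with
  | mem f hf =>
    have hΦf : Φ f = 0 := RingHom.mem_ker.mp (hS ▸ Ideal.subset_span hf)
    have hsf : F ∣ algebraMap R A (s f) * f := by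
      rw [← hp]
      apply dvd_aeval_of_coeff_zero_eq_zero
      rw [← Φ.apply_aeval_eq_coeff_zero hΦF, hp, map_mul, hΦf, mul_zero]
    obtain ⟨u, hu⟩ := Finset.dvd_prod_of_mem s hf
    rw [hu, map_mul, mul_comm (algebraMap R A (s f)), mul_assoc]
    exact hsf.mul_left _
  | zero => simp
  | add x y _ _ hx hy => rw [mul_add]; exact dvd_add hx hy
  | smul c x _ hx => rw [smul_eq_mul, mul_left_comm]; exact hx.mul_left c

theorem exists_pow_dvd_pow_mul_sub_aeval (Φ : A →ₐ[R] R) {t : R} {F : A}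
    (ht : ∀ b ∈ RingHom.ker Φ, F ∣ algebraMap R A t * b) (a : A) (N : ℕ) :
    ∃ n : ℕ, ∃ q : R[X], q.degree < N ∧ F ^ N ∣ algebraMap R A t ^ n * a - aeval F q := by
  induction N with
  | zero => exact ⟨0, 0, by simp, by simp⟩
  | succ N ih =>
    obtain ⟨n, q, hq, b, hb⟩ := ih
    obtain ⟨c, hc⟩ := ht (b - algebraMap R A (Φ b)) (by simp [RingHom.mem_ker])
    refine ⟨n + 1, C t * q + C (t * Φ b) * X ^ N, ?_, c, ?_⟩
    · refine (degree_add_le _ _).trans_lt (max_lt ?_ ?_)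
      · rw [← smul_eq_C_mul]
        exact (degree_smul_le t q).trans_lt (hq.trans (by norm_cast; omega))
      · exact (degree_C_mul_X_pow_le N _).trans_lt (by norm_cast; omega)
    · calc algebraMap R A t ^ (n + 1) * a - aeval F (C t * q + C (t * Φ b) * X ^ N)
          = algebraMap R A t * (algebraMap R A t ^ n * a - aeval F q)
            - algebraMap R A t * algebraMap R A (Φ b) * F ^ N := by simp; ring
        _ = F ^ N * (algebraMap R A t * (b - algebraMap R A (Φ b))) := by rw [hb]; ring
        _ = F ^ (N + 1) * c := by rw [hc]; ring

theorem Transcendental.eq_zero_of_pow_dvd_aeval [NoZeroDivisors R] {F : A}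
    (hF : Transcendental R F)
    (hfrac : ∀ a : A, ∃ s : R, s ≠ 0 ∧ algebraMap R A s * a ∈ Algebra.adjoin R {F})
    {P : R[X]} {N : ℕ} (hP : P.degree < N) (hdvd : F ^ N ∣ Polynomial.aeval F P) : P = 0 := by
  obtain ⟨b, hb⟩ := hdvd
  obtain ⟨s, hs, hsb⟩ := hfrac b
  rw [Algebra.adjoin_singleton_eq_range_aeval, AlgHom.mem_range] at hsb
  obtain ⟨h, hh⟩ := hsb
  have hXN : X ^ N ∣ C s * P := by
    refine ⟨h, transcendental_iff_injective.mp hF ?_⟩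
    simp only [map_mul, map_pow, aeval_X, aeval_C, hh, hb]
    ring
  ext d
  rw [coeff_zero]
  rcases lt_or_ge d N with hd | hd
  · have := X_pow_dvd_iff.mp hXN d hd
    rw [coeff_C_mul] at this
    exact (mul_eq_zero.mp this).resolve_left hs
  · exact coeff_eq_zero_of_degree_lt (hP.trans_le (by exact_mod_cast hd))

theorem exists_pow_mul_mem_adjoin [NoZeroDivisors R] [NoZeroDivisors A] (Φ : A →ₐ[R] R)
    {t : R} {F : A} (hF : Transcendental R F)
    (hfrac : ∀ a : A, ∃ s : R, s ≠ 0 ∧ algebraMap R A s * a ∈ Algebra.adjoin R {F})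
    (ht : ∀ b ∈ RingHom.ker Φ, F ∣ algebraMap R A t * b) (a : A) :
    ∃ n : ℕ, algebraMap R A t ^ n * a ∈ Algebra.adjoin R {F} := by
  obtain ⟨r, hr, hra⟩ := hfrac a
  simp only [Algebra.adjoin_singleton_eq_range_aeval, AlgHom.mem_range] at hra ⊢
  obtain ⟨p, hp⟩ := hra
  obtain ⟨n, q, hq, hdvd⟩ := exists_pow_dvd_pow_mul_sub_aeval Φ ht a (p.natDegree + 1)
  have haeval : aeval F (C (t ^ n) * p - C r * q)
      = algebraMap R A r * (algebraMap R A t ^ n * a - aeval F q) := by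
    simp only [map_sub, map_mul, aeval_C, map_pow, hp]
    ring
  have hdeg : (C (t ^ n) * p - C r * q).degree < ↑(p.natDegree + 1) := by
    refine (degree_sub_le _ _).trans_lt (max_lt ?_ ?_)
    · rw [← smul_eq_C_mul]
      exact (degree_smul_le _ p).trans_lt
        (degree_le_natDegree.trans_lt (by norm_cast; omega))
    · rw [← smul_eq_C_mul]
      exact (degree_smul_le r q).trans_lt hq
  have hzero := hF.eq_zero_of_pow_dvd_aeval hfrac hdeg (haeval ▸ hdvd.mul_left _)
  rw [hzero, map_zero, eq_comm, mul_eq_zero, sub_eq_zero] at haeval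
  have hr' : algebraMap R A r ≠ 0 := by
    rw [← aeval_C F r]
    exact (map_ne_zero_iff _ (transcendental_iff_injective.mp hF)).mpr (C_ne_zero.mpr hr)
  exact ⟨n, ⟨q, (haeval.resolve_left hr').symm⟩⟩

end Retraction

/-- Let `R` be an integral domain with quotient field `K` and `A`
an integral domain containing `R` with a retraction `Φ : A → R` whose kernel is
finitely generated. If `A ⊗_R K = K^{[1]}` (encoded: there is `x₀ ∈ A`
transcendental over `R` such that every `a ∈ A` satisfies `r·a ∈ R[x₀]` for some
nonzero `r ∈ R`), then there exist a nonzero `t ∈ R` and `F ∈ Ker Φ` such that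
`A[1/t] = R[1/t][F]` is a polynomial ring in one variable over `R[1/t]`. -/
theorem stmt10 {A : Type*} [CommRing A] [IsDomain A] (R : Subring A)
    (Φ : A →+* R) (hΦ : ∀ r : R, Φ (r : A) = r)
    (hfg : (RingHom.ker Φ).FG)
    (hK : ∃ x₀ : A, Transcendental R x₀ ∧
      ∀ a : A, ∃ r : R, r ≠ 0 ∧ (r : A) * a ∈ Algebra.adjoin R {x₀}) :
    ∃ t : R, t ≠ 0 ∧ ∃ F : A, Φ F = 0 ∧ Transcendental R F ∧
      ∀ a : A, ∃ n : ℕ, (t : A) ^ n * a ∈ Algebra.adjoin R {F} := by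
  obtain ⟨x₀, hx₀, hx₀frac⟩ := hK
  let Ψ : A →ₐ[R] R := { Φ with commutes' := hΦ }
  have hF : Transcendental R (x₀ - algebraMap R A (Φ x₀)) := hx₀.sub_algebraMap _
  have hΦF : Ψ (x₀ - algebraMap R A (Φ x₀)) = 0 := by
    rw [map_sub, AlgHom.commutes, sub_eq_zero]; rfl
  have hfrac : ∀ a : A, ∃ s : R, s ≠ 0 ∧
      algebraMap R A s * a ∈ Algebra.adjoin R {x₀ - algebraMap R A (Φ x₀)} := by
    rwa [Algebra.adjoin_singleton_sub_algebraMap]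
  obtain ⟨t, ht0, ht⟩ := exists_ne_zero_dvd_mul_of_mem_ker Ψ hfg hΦF hfrac
  exact ⟨t, ht0, _, hΦF, hF, exists_pow_mul_mem_adjoin Ψ hF hfrac ht⟩
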